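/- arXiv:0707.1474 — 6 statements merged into one kernel-verified Lean document; each statement's English description precedes it below -/
import Mathlib

section
/- Let Φ : ℕ×ℕ → ℂ be any function and let φ : ℕ → ℂ satisfy ∑_{j=0}^∞ |φ(j)|² < ∞. Then Φ(x,y) = ∑_{k=0}^∞ φ(x+k)φ(y+k) for all x,y ∈ ℕ if and only if both of the following hold: (a) Φ(x+1,y+1) − Φ(x,y) = −φ(x)φ(y) for all x,y ∈ ℕ; and (b) Φ(x,y) → 0 as x or y → ∞, i.e. for every ε > 0 there exists N such that |Φ(x,y)| < ε whenever x ≥ N or y ≥ N. -/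
/-!
`∑ₖ φ(x+k)φ(y+k)` converges and satisfies the Lyapunov equation by splitting off its `k = 0`
term, and it vanishes at infinity by Cauchy–Schwarz, being bounded by the geometric mean of the
`ℓ²`-tails of `φ` at `x` and at `y`. Conversely, if `Φ` satisfies the same equation, the
difference with the series is constant along each diagonal `n ↦ (x + n, y + n)`; as both vanish
at infinity, this constant is `0`.
-/

open Filter Topology

theorem Real.summable_and_tsum_mul_le_sqrt_mul_sqrt {ι : Type*} {f g : ι → ℝ}
    (hf : ∀ i, 0 ≤ f i) (hg : ∀ i, 0 ≤ g i)
    (hf_sum : Summable fun i => f i ^ 2) (hg_sum : Summable fun i => g i ^ 2) :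
    (Summable fun i => f i * g i) ∧
      ∑' i, f i * g i ≤ √(∑' i, f i ^ 2) * √(∑' i, g i ^ 2) := by
  simp_rw [← Real.rpow_two] at hf_sum hg_sum ⊢
  simpa only [Real.sqrt_eq_rpow] using
    Real.summable_and_inner_le_Lp_mul_Lq_tsum_of_nonneg .two_two hf hg hf_sum hg_sum

section NormedRing

variable {R : Type*} [NormedRing R]

theorem summable_mul_of_summable_norm_sq [CompleteSpace R] {ι : Type*} {f g : ι → R}
    (hf : Summable fun i => ‖f i‖ ^ 2) (hg : Summable fun i => ‖g i‖ ^ 2) :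
    Summable fun i => f i * g i :=
  .of_norm_bounded (Real.summable_and_tsum_mul_le_sqrt_mul_sqrt (fun i => norm_nonneg (f i))
    (fun i => norm_nonneg (g i)) hf hg).1 fun _ => norm_mul_le _ _

theorem norm_tsum_mul_le_sqrt_mul_sqrt {ι : Type*} {f g : ι → R}
    (hf : Summable fun i => ‖f i‖ ^ 2) (hg : Summable fun i => ‖g i‖ ^ 2) :
    ‖∑' i, f i * g i‖ ≤ √(∑' i, ‖f i‖ ^ 2) * √(∑' i, ‖g i‖ ^ 2) := by
  obtain ⟨hsum, hle⟩ := Real.summable_and_tsum_mul_le_sqrt_mul_sqrt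
    (fun i => norm_nonneg (f i)) (fun i => norm_nonneg (g i)) hf hg
  calc ‖∑' i, f i * g i‖ ≤ ∑' i, ‖f i‖ * ‖g i‖ :=
        tsum_of_norm_bounded hsum.hasSum fun _ => norm_mul_le _ _
    _ ≤ _ := hle

end NormedRing

/-- The kernel of `H_φ²`, where `H_φ = (φ (x + y))_{x,y}` is the Hankel matrix of `φ`. -/
noncomputable def hankelSq {R : Type*} [AddCommMonoid R] [Mul R] [TopologicalSpace R] (φ : ℕ → R)
    (x y : ℕ) : R :=
  ∑' k, φ (x + k) * φ (y + k)

def VanishesAtInfinity {E : Type*} [Norm E] (Φ : ℕ → ℕ → E) : Prop :=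
  ∀ ε > (0 : ℝ), ∃ N : ℕ, ∀ x y : ℕ, (N ≤ x ∨ N ≤ y) → ‖Φ x y‖ < ε

section Hankel

variable {R : Type*} [NormedRing R] {φ : ℕ → R}

theorem summable_norm_sq_comp_add_left (hφ : Summable fun j => ‖φ j‖ ^ 2) (x : ℕ) :
    Summable fun k => ‖φ (x + k)‖ ^ 2 :=
  hφ.comp_injective (add_right_injective x)

theorem tsum_norm_sq_comp_add_left_le (hφ : Summable fun j => ‖φ j‖ ^ 2) (x : ℕ) :
    ∑' k, ‖φ (x + k)‖ ^ 2 ≤ ∑' j, ‖φ j‖ ^ 2 :=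
  Summable.tsum_le_tsum_of_inj (x + ·) (add_right_injective x) (fun _ _ => sq_nonneg _)
    (fun _ => le_rfl) (summable_norm_sq_comp_add_left hφ x) hφ

theorem norm_hankelSq_le (hφ : Summable fun j => ‖φ j‖ ^ 2) (x y : ℕ) :
    ‖hankelSq φ x y‖ ≤ √(∑' k, ‖φ (x + k)‖ ^ 2) * √(∑' k, ‖φ (y + k)‖ ^ 2) :=
  norm_tsum_mul_le_sqrt_mul_sqrt (summable_norm_sq_comp_add_left hφ x)
    (summable_norm_sq_comp_add_left hφ y)

theorem hankelSq_vanishesAtInfinity (hφ : Summable fun j => ‖φ j‖ ^ 2) :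
    VanishesAtInfinity (hankelSq φ) := by
  set S := ∑' j, ‖φ j‖ ^ 2
  set T : ℕ → ℝ := fun x => ∑' k, ‖φ (x + k)‖ ^ 2
  have hT : Tendsto T atTop (𝓝 0) := by
    simpa only [T, add_comm] using tendsto_sum_nat_add fun j => ‖φ j‖ ^ 2
  have hbound : Tendsto (fun x => √(T x) * √S) atTop (𝓝 0) := by
    simpa using ((Real.continuous_sqrt.tendsto 0).comp hT).mul_const √S
  intro ε hε
  obtain ⟨N, hN⟩ := eventually_atTop.1 (hbound.eventually (gt_mem_nhds hε))
  refine ⟨N, fun x y hxy => ?_⟩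
  have hTS := tsum_norm_sq_comp_add_left_le hφ
  rcases hxy with hx | hy
  · calc ‖hankelSq φ x y‖ ≤ √(T x) * √(T y) := norm_hankelSq_le hφ x y
      _ ≤ √(T x) * √S := by gcongr; exact hTS y
      _ < ε := hN x hx
  · calc ‖hankelSq φ x y‖ ≤ √(T x) * √(T y) := norm_hankelSq_le hφ x y
      _ ≤ √S * √(T y) := by gcongr; exact hTS x
      _ < ε := mul_comm (√S) _ ▸ hN y hy

theorem hankelSq_add_one_sub [CompleteSpace R] (hφ : Summable fun j => ‖φ j‖ ^ 2) (x y : ℕ) :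
    hankelSq φ (x + 1) (y + 1) - hankelSq φ x y = -(φ x * φ y) := by
  have hsum := summable_mul_of_summable_norm_sq (summable_norm_sq_comp_add_left hφ x)
    (summable_norm_sq_comp_add_left hφ y)
  rw [hankelSq, hankelSq, hsum.tsum_eq_zero_add]
  simp only [add_zero, ← add_assoc, add_right_comm _ 1]
  abel

end Hankel

section VanishesAtInfinity

variable {E : Type*} [NormedAddCommGroup E] {Φ Ψ : ℕ → ℕ → E}

theorem VanishesAtInfinity.tendsto_diag (hΦ : VanishesAtInfinity Φ) (x y : ℕ) :
    Tendsto (fun n => Φ (x + n) (y + n)) atTop (𝓝 0) :=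
  Metric.tendsto_atTop.2 fun ε hε => by
    obtain ⟨N, hN⟩ := hΦ ε hε
    exact ⟨N, fun n hn => by simpa using hN (x + n) (y + n) (.inl (by omega))⟩

theorem VanishesAtInfinity.eq_of_add_one_sub_eq (hΦ : VanishesAtInfinity Φ)
    (hΨ : VanishesAtInfinity Ψ)
    (h : ∀ x y, Φ (x + 1) (y + 1) - Φ x y = Ψ (x + 1) (y + 1) - Ψ x y) : Φ = Ψ := by
  funext x y
  have hconst : ∀ n, Φ (x + n) (y + n) - Ψ (x + n) (y + n) = Φ x y - Ψ x y := by
    intro n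
    induction n with
    | zero => rfl
    | succ n ih =>
      rw [← ih, ← add_assoc, ← add_assoc]
      exact sub_eq_sub_iff_sub_eq_sub.1 (h (x + n) (y + n))
  have hlim := (hΦ.tendsto_diag x y).sub (hΨ.tendsto_diag x y)
  simp only [hconst, sub_zero] at hlim
  exact sub_eq_zero.1 (tendsto_const_nhds_iff.1 hlim)

end VanishesAtInfinity

/-- For `φ ∈ ℓ²`, a kernel `Φ : ℕ×ℕ → ℂ` equals the square-of-Hankel kernel
`∑_k φ(x+k)φ(y+k)` if and only if it satisfies the discrete Lyapunov equation
`Φ(x+1,y+1) − Φ(x,y) = −φ(x)φ(y)` and vanishes at infinity. -/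
theorem stmt_1 (Φ : ℕ → ℕ → ℂ) (φ : ℕ → ℂ)
    (hφ : Summable fun j : ℕ => ‖φ j‖ ^ 2) :
    (∀ x y : ℕ, Φ x y = ∑' k : ℕ, φ (x + k) * φ (y + k))
    ↔ ((∀ x y : ℕ, Φ (x + 1) (y + 1) - Φ x y = -(φ x * φ y))
        ∧ (∀ ε > (0 : ℝ), ∃ N : ℕ, ∀ x y : ℕ, (N ≤ x ∨ N ≤ y) → ‖Φ x y‖ < ε)) := by
  change (∀ x y, Φ x y = hankelSq φ x y) ↔ (_ ∧ VanishesAtInfinity Φ)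
  constructor
  · intro hΦ
    obtain rfl : Φ = hankelSq φ := funext₂ hΦ
    exact ⟨hankelSq_add_one_sub hφ, hankelSq_vanishesAtInfinity hφ⟩
  · rintro ⟨hΦ, hvanish⟩
    have := hvanish.eq_of_add_one_sub_eq (hankelSq_vanishesAtInfinity hφ) fun x y => by
      rw [hΦ, hankelSq_add_one_sub hφ]
    exact fun x y => congrFun₂ this x y
end

section
/- Let F = [[0,−1],[1,0]]. Let a(x) = [A(x), B(x)]ᵀ, x ∈ ℕ, be a sequence of 2×1 real vectors with ∑_{x≥0} ‖a(x)‖² < ∞, and for x ≠ y define K(x,y) = (A(x)B(y) − A(y)B(x))/(x−y) = ⟨F a(x), a(y)⟩/(x−y). Suppose there exist 2×2 real matrices S_x with a(x+1) = S_x a(x) for all x ∈ ℕ, and a constant 2×2 real matrix C such that S_yᵀ F S_x − F = (x−y)·C for all x ≠ y. Suppose further that C has eigenvalues λ ∈ ℝ∖{0} and 0, and let [α,β]ᵀ be a real unit eigenvector of C for the eigenvalue λ. Then, setting φ(x) = |λ|^{1/2}(α A(x) + β B(x)), one has (φ(x)) ∈ ℓ² and K(x,y) = −sgn(λ) ∑_{k=0}^∞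 φ(x+k) φ(y+k) for all x,y ∈ ℕ with x ≠ y. -/
/-!
Write `a x = (A x, B x)` and `F = [[0, -1], [1, 0]]`, so that the numerator of the kernel is
`N(x, y) = a y ⬝ᵥ F a x`. The recurrence turns the hypothesis on `S` into the diagonal step
`N(x+1, y+1) = N(x, y) + (x - y) (a y ⬝ᵥ C a x)`. Since `F` is skew, `C` is symmetric; being singular
with the unit eigenvector `(α, β)` for `λ ≠ 0`, it equals `λ (α, β)(α, β)ᵀ`, so the increment is
`(x - y) sgn(λ) φ(x) φ(y)`. As `a` is square summable, `N(x+n, y+n) → 0`, and telescoping along the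
diagonal gives `N(x, y) = -(x - y) sgn(λ) ∑ₖ φ(x+k) φ(y+k)`.
-/

open Matrix Filter Topology

theorem Real.sign_mul_abs (r : ℝ) : Real.sign r * |r| = r := by
  rcases lt_trichotomy r 0 with h | rfl | h
  · rw [Real.sign_of_neg h, abs_of_neg h]; ring
  · simp
  · rw [Real.sign_of_pos h, abs_of_pos h]; ring

theorem Real.mul_mul_eq_sign_mul_sqrt_abs (r p q : ℝ) :
    r * (p * q) = Real.sign r * ((√|r| * p) * (√|r| * q)) := by
  linear_combination (-p * q) *
    (Real.sign_mul_abs r + Real.sign r * Real.mul_self_sqrt (abs_nonneg r))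

section SquareSummable

variable {ι : Type*}

theorem summable_sq_mul_add_mul {u w : ι → ℝ} (huw : Summable fun i => u i ^ 2 + w i ^ 2)
    (c α β : ℝ) : Summable fun i => (c * (α * u i + β * w i)) ^ 2 := by
  refine (huw.mul_left (c ^ 2 * (α ^ 2 + β ^ 2))).of_nonneg_of_le (fun _ => sq_nonneg _)
    fun i => ?_
  rw [mul_pow, mul_assoc]
  gcongr
  nlinarith [sq_nonneg (β * u i - α * w i)]

theorem summable_mul_of_summable_sq {u w : ι → ℝ} (hu : Summable fun i => u i ^ 2)
    (hw : Summable fun i => w i ^ 2) : Summable fun i => u i * w i := by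
  refine Summable.of_norm_bounded (hu.add hw) fun i => ?_
  rw [Real.norm_eq_abs, abs_mul, ← sq_abs (u i), ← sq_abs (w i)]
  nlinarith [sq_nonneg (|u i| - |w i|), abs_nonneg (u i), abs_nonneg (w i)]

end SquareSummable

theorem tendsto_add_zero_of_summable_sq {u : ℕ → ℝ} (hu : Summable fun n => u n ^ 2) (m : ℕ) :
    Tendsto (fun n => u (m + n)) atTop (𝓝 0) := by
  have hsq := hu.tendsto_atTop_zero.sqrt
  simp_rw [Real.sqrt_sq_eq_abs, Real.sqrt_zero] at hsq
  simpa only [add_comm m] using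
    (tendsto_add_atTop_iff_nat m).mpr ((tendsto_zero_iff_abs_tendsto_zero u).mpr hsq)

theorem tendsto_add_mul_sub_mul_of_summable {u w : ℕ → ℝ}
    (huw : Summable fun n => u n ^ 2 + w n ^ 2) (x y : ℕ) :
    Tendsto (fun n => u (x + n) * w (y + n) - u (y + n) * w (x + n)) atTop (𝓝 0) := by
  have hu : Summable fun n => u n ^ 2 :=
    huw.of_nonneg_of_le (fun _ => sq_nonneg _) fun n => le_add_of_nonneg_right (sq_nonneg _)
  have hw : Summable fun n => w n ^ 2 :=
    huw.of_nonneg_of_le (fun _ => sq_nonneg _) fun n => le_add_of_nonneg_left (sq_nonneg _)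
  simpa using ((tendsto_add_zero_of_summable_sq hu x).mul (tendsto_add_zero_of_summable_sq hw y)).sub
    ((tendsto_add_zero_of_summable_sq hu y).mul (tendsto_add_zero_of_summable_sq hw x))

theorem Summable.hasSum_of_telescoping {G : Type*} [AddCommGroup G] [TopologicalSpace G]
    [IsTopologicalAddGroup G] [T2Space G] {f g : ℕ → G} {l : G} (hg : Summable g)
    (hfg : ∀ n, f (n + 1) = f n + g n) (hf : Tendsto f atTop (𝓝 l)) : HasSum g (l - f 0) := by
  have hpartial (n : ℕ) : ∑ k ∈ Finset.range n, g k = f n - f 0 := by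
    rw [← Finset.sum_range_sub]
    simp [hfg]
  have hlim := hg.hasSum.tendsto_sum_nat
  simp_rw [hpartial] at hlim
  rw [← tendsto_nhds_unique hlim (hf.sub_const (f 0))]
  exact hg.hasSum

theorem eq_neg_mul_tsum_of_telescoping {f u w : ℕ → ℝ} {c : ℝ} (hu : Summable fun n => u n ^ 2)
    (hw : Summable fun n => w n ^ 2) (hstep : ∀ n, f (n + 1) = f n + c * (u n * w n))
    (hf : Tendsto f atTop (𝓝 0)) : f 0 = -(c * ∑' n, u n * w n) := by
  have hsum := ((summable_mul_of_summable_sq hu hw).mul_left c).hasSum_of_telescoping hstep hf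
  rw [← tsum_mul_left, hsum.tsum_eq, zero_sub, neg_neg]

namespace Matrix

theorem transpose_eq_self_of_transpose_mul_mul_sub {n R : Type*} [Fintype n] [CommRing R]
    {F S T C : Matrix n n R} (hF : Fᵀ = -F) (hTS : Tᵀ * F * S - F = C)
    (hST : Sᵀ * F * T - F = -C) : Cᵀ = C :=
  calc Cᵀ = -(Sᵀ * F * T - F)ᵀ := by rw [hST, transpose_neg, neg_neg]
    _ = Tᵀ * F * S - F := by simp [transpose_mul, hF, Matrix.mul_assoc]; abel
    _ = C := hTS

theorem eq_smul_vecMulVec_of_det_eq_zero {K : Type*} [Field K]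
    {C : Matrix (Fin 2) (Fin 2) K} {v : Fin 2 → K} {l : K} (hl : l ≠ 0) (hC : Cᵀ = C)
    (hdet : C.det = 0) (hv : v ⬝ᵥ v = 1) (heig : C *ᵥ v = l • v) : C = l • vecMulVec v v := by
  have h10 : C 1 0 = C 0 1 := by simpa using congrFun (congrFun hC 0) 1
  have e0 := congrFun heig 0
  have e1 := congrFun heig 1
  simp only [mulVec, dotProduct, Fin.sum_univ_two, Pi.smul_apply, smul_eq_mul, h10] at e0 e1 hv
  rw [det_fin_two, h10] at hdet
  ext i j
  -- With `w = (-v 1, v 0)`: symmetry gives `v ⬝ᵥ C w = l (v ⬝ᵥ w) = 0`, and `det C = 0` makes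
  -- `C w` parallel to `C v = l v`; so `C w = 0` and `C = C (v vᵀ + w wᵀ) = l v vᵀ`.
  fin_cases i <;> fin_cases j <;> simp [vecMulVec, h10] <;> grind

theorem dotProduct_smul_vecMulVec_mulVec {n R : Type*} [Fintype n] [CommRing R]
    (l : R) (u v w : n → R) : u ⬝ᵥ (l • vecMulVec v v) *ᵥ w = l * ((v ⬝ᵥ u) * (v ⬝ᵥ w)) := by
  simp [smul_mulVec, vecMulVec_mulVec, dotProduct_comm u]
  ring

theorem mulVec_dotProduct_mulVec_mulVec {n R : Type*} [Fintype n] [CommRing R]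
    (F S T : Matrix n n R) (u w : n → R) :
    T *ᵥ w ⬝ᵥ F *ᵥ S *ᵥ u = w ⬝ᵥ (Tᵀ * F * S) *ᵥ u := by
  rw [dotProduct_comm, dotProduct_mulVec, dotProduct_mulVec, ← mulVec_transpose, dotProduct_comm,
    mulVec_mulVec, mulVec_mulVec, dotProduct_mulVec]

theorem dotProduct_mulVec_add_one {n : Type*} [Fintype n] {a : ℕ → n → ℝ}
    {S : ℕ → Matrix n n ℝ} {F C : Matrix n n ℝ} (ha : ∀ x, a (x + 1) = S x *ᵥ a x)
    (hC : ∀ x y : ℕ, x ≠ y → (S y)ᵀ * F * S x - F = ((x : ℝ) - y) • C) {x y : ℕ}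
    (hxy : x ≠ y) :
    a (y + 1) ⬝ᵥ F *ᵥ a (x + 1) = a y ⬝ᵥ F *ᵥ a x + (x - y) * (a y ⬝ᵥ C *ᵥ a x) := by
  rw [ha, ha, mulVec_dotProduct_mulVec_mulVec, ← sub_add_cancel ((S y)ᵀ * F * S x) F,
    hC x y hxy, add_mulVec, dotProduct_add, smul_mulVec, dotProduct_smul, smul_eq_mul, add_comm]

end Matrix

/-- Theorem 3 of the paper: a discrete Tracy–Widom kernel whose coefficient vectors satisfy a
linear recurrence `a(x+1) = S_x a(x)` with `S_yᵀ F S_x − F = (x−y)·C` for a constant matrix `C`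
having eigenvalues `λ ≠ 0` and `0`, is (up to sign) the square of a Hankel matrix, with symbol
`φ(x) = |λ|^{1/2}(α A(x) + β B(x))` for `[α,β]ᵀ` a unit eigenvector of `C` for `λ`. -/
theorem stmt_4 (A B : ℕ → ℝ)
    (ha : Summable fun x : ℕ => (A x) ^ 2 + (B x) ^ 2)
    (K : ℕ → ℕ → ℝ)
    (hK : ∀ x y : ℕ, x ≠ y → K x y = (A x * B y - A y * B x) / ((x : ℝ) - y))
    (S : ℕ → Matrix (Fin 2) (Fin 2) ℝ)
    (hS : ∀ x : ℕ, ![A (x + 1), B (x + 1)] = (S x).mulVec ![A x, B x])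
    (C : Matrix (Fin 2) (Fin 2) ℝ)
    (hC : ∀ x y : ℕ, x ≠ y →
      (S y)ᵀ * !![(0 : ℝ), -1; 1, 0] * (S x) - !![(0 : ℝ), -1; 1, 0]
        = ((x : ℝ) - (y : ℝ)) • C)
    (lam : ℝ) (hlam : lam ≠ 0)
    (hzero : ∃ v : Fin 2 → ℝ, v ≠ 0 ∧ C.mulVec v = 0)
    (α β : ℝ) (hunit : α ^ 2 + β ^ 2 = 1)
    (heig : C.mulVec ![α, β] = lam • ![α, β]) :
    (Summable fun x : ℕ => (Real.sqrt |lam| * (α * A x + β * B x)) ^ 2)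
    ∧ ∀ x y : ℕ, x ≠ y →
        K x y = -(Real.sign lam) *
          ∑' k : ℕ, (Real.sqrt |lam| * (α * A (x + k) + β * B (x + k)))
            * (Real.sqrt |lam| * (α * A (y + k) + β * B (y + k))) := by
  set F : Matrix (Fin 2) (Fin 2) ℝ := !![0, -1; 1, 0]
  set a : ℕ → Fin 2 → ℝ := fun x => ![A x, B x]
  set φ : ℕ → ℝ := fun x => √|lam| * (α * A x + β * B x)
  have hF : Fᵀ = -F := by ext i j; fin_cases i <;> fin_cases j <;> simp [F]
  have hCsymm : Cᵀ = C := transpose_eq_self_of_transpose_mul_mul_sub hF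
    (by simpa using hC 1 0 one_ne_zero) (by simpa using hC 0 1 zero_ne_one)
  have hCrank : C = lam • vecMulVec ![α, β] ![α, β] :=
    eq_smul_vecMulVec_of_det_eq_zero hlam hCsymm (exists_mulVec_eq_zero_iff.mp hzero)
      (by simpa [sq] using hunit) heig
  have hφ : Summable fun x => φ x ^ 2 := summable_sq_mul_add_mul ha _ _ _
  refine ⟨hφ, fun x y hxy => ?_⟩
  set N : ℕ → ℝ := fun n => a (y + n) ⬝ᵥ F *ᵥ a (x + n)
  have hN (n : ℕ) : N n = A (x + n) * B (y + n) - A (y + n) * B (x + n) := by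
    simp [N, a, F, dotProduct, mulVec, Fin.sum_univ_two]
    ring
  have hstep (n : ℕ) : N (n + 1) = N n + (x - y) * Real.sign lam * (φ (x + n) * φ (y + n)) := by
    have hcast : ((x + n : ℕ) : ℝ) - (y + n : ℕ) = x - y := by push_cast; ring
    simp only [N, ← add_assoc]
    rw [dotProduct_mulVec_add_one hS hC (by omega), hcast, hCrank,
      dotProduct_smul_vecMulVec_mulVec, Real.mul_mul_eq_sign_mul_sqrt_abs lam]
    simp only [a, φ, dotProduct, Fin.sum_univ_two, cons_val_zero, cons_val_one]
    ring
  have hshift (m : ℕ) : Summable fun n => φ (m + n) ^ 2 := by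
    simpa only [add_comm m] using (summable_nat_add_iff m).mpr hφ
  have hN0 := eq_neg_mul_tsum_of_telescoping (hshift x) (hshift y) hstep
    ((tendsto_add_mul_sub_mul_of_summable ha x y).congr fun n => (hN n).symm)
  rw [hN 0, add_zero, add_zero] at hN0
  rw [hK x y hxy, hN0, div_eq_iff (sub_ne_zero.mpr (Nat.cast_injective.ne hxy))]
  ring
end

section
/- For n ∈ ℕ and z ∈ ℝ, define J_n(2z) = ∑_{k=0}^∞ (−1)^k z^{n+2k}/(k!(n+k)!) (the Bessel function of the first kind). Let θ > 0 be real and write J_x = J_x(2√θ). Then for all x, y ∈ ℕ with x ≠ y, the discrete Bessel kernel satisfies √θ·(J_x J_{y+1} − J_y J_{x+1})/(x−y) = ∑_{k=0}^∞ J_{x+k+1}(2√θ) · J_{y+k+1}(2√θ). -/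
/-- `besselJ n z = J_n(2z) = ∑_{k=0}^∞ (−1)^k z^{n+2k}/(k!(n+k)!)`, the Bessel function of
the first kind of integer order `n`, evaluated at `2z`. -/
noncomputable def besselJ (n : ℕ) (z : ℝ) : ℝ :=
  ∑' k : ℕ, (-1 : ℝ) ^ k * z ^ (n + 2 * k) / ((Nat.factorial k) * (Nat.factorial (n + k)))

/-! The Bessel functions satisfy the three-term recurrence `(n + 1) J_{n+1} = z (J_n + J_{n+2})`
(for `J_n = J_n(2z)`). Multiplying the recurrences at `x + k` and `y + k` crosswise shows that
`(x - y) J_{x+k+1} J_{y+k+1}` is `z` times the difference of consecutive values of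
`W_k = J_{x+k} J_{y+k+1} - J_{y+k} J_{x+k+1}`, so the series telescopes to `z W_0`, because
`J_n → 0` as `n → ∞`. -/

open Filter Topology Real
open scoped Nat

noncomputable def besselJTerm (n : ℕ) (z : ℝ) (k : ℕ) : ℝ :=
  (-1 : ℝ) ^ k * z ^ (n + 2 * k) / ((k ! : ℝ) * (n + k)!)

/-- The Casoratian of the sequences `k ↦ J_{a+k}` and `k ↦ J_{b+k}` at `k = 0`. -/
noncomputable def besselCasoratian (a b : ℕ) (z : ℝ) : ℝ :=
  besselJ a z * besselJ (b + 1) z - besselJ b z * besselJ (a + 1) z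

theorem hasSum_sub_succ_of_tendsto {G : Type*} [AddCommGroup G] [TopologicalSpace G]
    [IsTopologicalAddGroup G] [T2Space G] {f : ℕ → G} {l : G}
    (hs : Summable fun n => f n - f (n + 1)) (hf : Tendsto f atTop (𝓝 l)) :
    HasSum (fun n => f n - f (n + 1)) (f 0 - l) := by
  rw [hs.hasSum_iff_tendsto_nat]
  simp_rw [Finset.sum_range_sub']
  exact tendsto_const_nhds.sub hf

section

variable (n : ℕ) (z : ℝ)

theorem abs_besselJTerm_le (k : ℕ) :
    |besselJTerm n z k| ≤ |z| ^ n / n ! * ((z ^ 2) ^ k / k !) := by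
  rw [besselJTerm, abs_div, abs_mul, abs_pow, abs_neg, abs_one, one_pow, one_mul, abs_pow,
    abs_of_pos (by positivity : (0 : ℝ) < k ! * (n + k)!), div_mul_div_comm, ← sq_abs, ← pow_mul,
    ← pow_add, mul_comm (n ! : ℝ)]
  gcongr
  omega

theorem hasSum_besselJ : HasSum (besselJTerm n z) (besselJ n z) :=
  (Summable.of_nonneg_of_le (fun _ => abs_nonneg _) (abs_besselJTerm_le n z)
    ((Real.summable_pow_div_factorial _).mul_left _)).of_abs.hasSum

theorem abs_besselJ_le : |besselJ n z| ≤ |z| ^ n / n ! * exp (z ^ 2) := by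
  refine (hasSum_besselJ n z).norm_le_of_bounded ?_ (abs_besselJTerm_le n z)
  rw [exp_eq_exp_ℝ]
  exact (NormedSpace.expSeries_div_hasSum_exp (z ^ 2)).mul_left _

theorem abs_besselJ_le_exp : |besselJ n z| ≤ exp |z| * exp (z ^ 2) :=
  (abs_besselJ_le n z).trans (by gcongr; exact Real.pow_div_factorial_le_exp _ (abs_nonneg z) n)

theorem besselJTerm_succ_zero :
    ((n : ℝ) + 1) * besselJTerm (n + 1) z 0 = z * besselJTerm n z 0 := by
  simp only [besselJTerm, mul_zero, add_zero, pow_zero, Nat.factorial_succ]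
  push_cast
  field_simp
  ring

theorem besselJTerm_succ_succ (k : ℕ) :
    ((n : ℝ) + 1) * besselJTerm (n + 1) z (k + 1)
      = z * besselJTerm n z (k + 1) + z * besselJTerm (n + 2) z k := by
  simp only [besselJTerm, show n + 1 + (k + 1) = n + k + 1 + 1 by omega,
    show n + 2 + k = n + k + 1 + 1 by omega, show n + (k + 1) = n + k + 1 by omega,
    Nat.factorial_succ]
  push_cast
  field_simp
  ring

theorem succ_mul_besselJ_succ :
    ((n : ℝ) + 1) * besselJ (n + 1) z = z * (besselJ n z + besselJ (n + 2) z) := by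
  refine ((hasSum_besselJ (n + 1) z).mul_left _).unique ((hasSum_nat_add_iff' 1).1 ?_)
  have h := ((hasSum_nat_add_iff' 1).2 ((hasSum_besselJ n z).mul_left z)).add
    ((hasSum_besselJ (n + 2) z).mul_left z)
  simp only [Finset.sum_range_one, ← besselJTerm_succ_succ, ← besselJTerm_succ_zero] at h
  convert h using 1
  rw [Finset.sum_range_one]
  ring

end

section

variable (z : ℝ)

theorem summable_abs_besselJ : Summable fun n => |besselJ n z| :=
  .of_nonneg_of_le (fun _ => abs_nonneg _) (abs_besselJ_le · z)
    ((Real.summable_pow_div_factorial |z|).mul_right _)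

theorem tendsto_besselJ_comp {f : ℕ → ℕ} (hf : ∀ k, k ≤ f k) :
    Tendsto (fun k => besselJ (f k) z) atTop (𝓝 0) :=
  (summable_abs_besselJ z).of_abs.tendsto_atTop_zero.comp
    (tendsto_atTop_mono hf tendsto_id)

theorem summable_besselJ_mul_besselJ (a b : ℕ) :
    Summable fun k => besselJ (a + k) z * besselJ (b + k) z := by
  refine .of_norm_bounded (((summable_abs_besselJ z).comp_injective
    (add_right_injective a)).mul_right (exp |z| * exp (z ^ 2))) fun k => ?_
  rw [Real.norm_eq_abs, abs_mul]
  exact mul_le_mul_of_nonneg_left (abs_besselJ_le_exp _ z) (abs_nonneg _)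

theorem sub_mul_besselJ_mul_besselJ (a b : ℕ) :
    ((a : ℝ) - b) * (besselJ (a + 1) z * besselJ (b + 1) z)
      = z * (besselCasoratian a b z - besselCasoratian (a + 1) (b + 1) z) := by
  have ha := succ_mul_besselJ_succ a z
  have hb := succ_mul_besselJ_succ b z
  simp only [besselCasoratian]
  linear_combination besselJ (b + 1) z * ha - besselJ (a + 1) z * hb

theorem hasSum_sub_mul_besselJ_mul_besselJ (x y : ℕ) :
    HasSum (fun k => ((x : ℝ) - y) * (besselJ (x + k + 1) z * besselJ (y + k + 1) z))
      (z * besselCasoratian x y z) := by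
  have hstep : ∀ k, ((x : ℝ) - y) * (besselJ (x + k + 1) z * besselJ (y + k + 1) z)
      = z * besselCasoratian (x + k) (y + k) z - z * besselCasoratian (x + k + 1) (y + k + 1) z :=
    fun k => by
      rw [← mul_sub, ← sub_mul_besselJ_mul_besselJ]
      push_cast
      ring
  have hprod : Summable fun k => besselJ (x + k + 1) z * besselJ (y + k + 1) z := by
    simpa only [add_right_comm _ 1] using summable_besselJ_mul_besselJ z (x + 1) (y + 1)
  have hW : Tendsto (fun k => z * besselCasoratian (x + k) (y + k) z) atTop (𝓝 0) := by
    have hJ : ∀ c d : ℕ, Tendsto (fun k => besselJ (c + k + d) z) atTop (𝓝 0) :=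
      fun c d => tendsto_besselJ_comp z fun k => by omega
    simpa [besselCasoratian] using
      (((hJ x 0).mul (hJ y 1)).sub ((hJ y 0).mul (hJ x 1))).const_mul z
  simp_rw [hstep]
  simpa only [add_zero, sub_zero, ← add_assoc] using
    hasSum_sub_succ_of_tendsto ((hprod.mul_left _).congr hstep) hW

theorem stmt_9_general (θ : ℝ) (x y : ℕ) (hxy : x ≠ y) :
    Real.sqrt θ * (besselJ x (Real.sqrt θ) * besselJ (y + 1) (Real.sqrt θ)
          - besselJ y (Real.sqrt θ) * besselJ (x + 1) (Real.sqrt θ)) / ((x : ℝ) - y)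
      = ∑' k : ℕ, besselJ (x + k + 1) (Real.sqrt θ) * besselJ (y + k + 1) (Real.sqrt θ) := by
  have hxy' : (x : ℝ) - y ≠ 0 := sub_ne_zero.2 (Nat.cast_injective.ne hxy)
  rw [div_eq_iff hxy', ← tsum_mul_right]
  simp_rw [mul_comm _ ((x : ℝ) - y)]
  rw [(hasSum_sub_mul_besselJ_mul_besselJ _ x y).tsum_eq, besselCasoratian]

/-- The discrete Bessel kernel is the square of the Hankel matrix of Bessel functions
(Borodin–Okounkov–Olshanski):
`√θ (J_x J_{y+1} − J_y J_{x+1})/(x−y) = ∑_{k=0}^∞ J_{x+k+1}(2√θ) J_{y+k+1}(2√θ)`. -/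
theorem stmt_9 (θ : ℝ) (hθ : 0 < θ) (x y : ℕ) (hxy : x ≠ y) :
    Real.sqrt θ * (besselJ x (Real.sqrt θ) * besselJ (y + 1) (Real.sqrt θ)
          - besselJ y (Real.sqrt θ) * besselJ (x + 1) (Real.sqrt θ)) / ((x : ℝ) - y)
      = ∑' k : ℕ, besselJ (x + k + 1) (Real.sqrt θ) * besselJ (y + k + 1) (Real.sqrt θ) :=
  stmt_9_general θ x y hxy
end
end

section
/- Let φ : ℕ → ℂ and suppose the Hankel matrix Γ_φ = [φ(m+n)]_{m,n≥0} defines a bounded operator on ℓ²(ℕ,ℂ). Then the kernel of Γ_φ is either {0} or infinite-dimensional. Consequently, for K = Γ_φ*Γ_φ one has ν_K(0) = 0 or ν_K(0) = ∞. -/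
/-!
The kernel of a Hankel operator is invariant under the forward shift `S`, because
`Γ (S x) m = Γ x (m + 1)`. Since `ℂ` is algebraically closed, a nonzero finite-dimensional
`S`-invariant subspace would contain an eigenvector of `S`, but `S x = μ x` forces `x = 0`
coordinate by coordinate. Finally `ker (Γ* Γ) = ker Γ`.
-/

open scoped ENNReal

theorem Submodule.eq_bot_or_not_finiteDimensional_of_forall_eq_smul_imp_eq_zero
    {K V : Type*} [Field K] [IsAlgClosed K] [AddCommGroup V] [Module K V] {f : Module.End K V}
    (hf : ∀ (μ : K) (x : V), f x = μ • x → x = 0) {P : Submodule K V}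
    (hP : ∀ x ∈ P, f x ∈ P) : P = ⊥ ∨ ¬ FiniteDimensional K P := by
  by_contra! ⟨hne, hfin⟩
  have : Nontrivial P := Submodule.nontrivial_iff_ne_bot.mpr hne
  obtain ⟨μ, hμ⟩ := Module.End.exists_eigenvalue (f.restrict hP)
  obtain ⟨v, hv⟩ := hμ.exists_hasEigenvector
  have hfv : f v = μ • (v : V) := congrArg Subtype.val hv.apply_eq_smul
  exact hv.2 (Subtype.ext (hf μ v hfv))

section Shift

def seqShift {E : Type*} [Zero E] (x : ℕ → E) : ℕ → E := fun n => Nat.casesOn n 0 x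

@[simp] lemma seqShift_zero {E : Type*} [Zero E] (x : ℕ → E) : seqShift x 0 = 0 := rfl

@[simp] lemma seqShift_succ {E : Type*} [Zero E] (x : ℕ → E) (n : ℕ) :
    seqShift x (n + 1) = x n := rfl

variable {𝕜 E : Type*} [NormedField 𝕜] [NormedAddCommGroup E] [NormedSpace 𝕜 E]
  {p : ℝ≥0∞}

lemma Memℓp.seqShift {x : ℕ → E} (hx : Memℓp x p) : Memℓp (seqShift x) p := by
  rcases p.trichotomy with rfl | rfl | hp
  · refine memℓp_zero ((hx.finite_dsupport.image Nat.succ).subset ?_)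
    rintro (_ | n) hn
    · exact absurd rfl hn
    · exact ⟨n, hn, rfl⟩
  · obtain ⟨C, hC⟩ := hx.bddAbove
    refine memℓp_infty ⟨C, ?_⟩
    rintro _ ⟨_ | n, rfl⟩
    · simpa using (norm_nonneg _).trans (hC ⟨0, rfl⟩)
    · exact hC ⟨n, rfl⟩
  · exact memℓp_gen ((summable_nat_add_iff 1).mp (by simpa using hx.summable hp))

namespace lp

variable (𝕜) in
def shift : lp (fun _ : ℕ => E) p →ₗ[𝕜] lp (fun _ : ℕ => E) p where
  toFun x := ⟨seqShift x, (lp.memℓp x).seqShift⟩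
  map_add' x y := lp.ext <| funext fun n =>
    show seqShift ⇑(x + y) n = seqShift x n + seqShift y n by cases n <;> simp [seqShift]
  map_smul' c x := lp.ext <| funext fun n =>
    show seqShift ⇑(c • x) n = c • seqShift x n by cases n <;> simp [seqShift]

@[simp] lemma shift_apply_zero (x : lp (fun _ : ℕ => E) p) :
    (shift 𝕜 x : ℕ → E) 0 = 0 := rfl

@[simp] lemma shift_apply_succ (x : lp (fun _ : ℕ => E) p) (n : ℕ) :
    (shift 𝕜 x : ℕ → E) (n + 1) = x n := rfl

lemma eq_zero_of_shift_eq_smul {x : lp (fun _ : ℕ => E) p} {μ : 𝕜}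
    (h : shift 𝕜 x = μ • x) : x = 0 := by
  have hcoord (n : ℕ) : (shift 𝕜 x : ℕ → E) n = μ • x n := by rw [h]; rfl
  have h0 : μ • x 0 = 0 := (hcoord 0).symm
  have hsucc (n : ℕ) : μ • x (n + 1) = x n := (hcoord (n + 1)).symm
  suffices hx : ∀ n, x n = 0 by ext n; simp [hx]
  intro n
  by_cases hμ : μ = 0
  · simpa [hμ] using (hsucc n).symm
  · induction n with
    | zero => exact (smul_eq_zero.mp h0).resolve_left hμ
    | succ k ih => exact (smul_eq_zero.mp ((hsucc k).trans ih)).resolve_left hμ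

end lp

end Shift

namespace lp

variable {𝕜 : Type*} [NormedField 𝕜] {p q : ℝ≥0∞} [Fact (1 ≤ p)] [Fact (1 ≤ q)]

lemma hasSum_mul_apply_single {α : Type*} [DecidableEq α]
    (Γ : lp (fun _ : α => 𝕜) p →L[𝕜] lp (fun _ : α => 𝕜) q)
    (hp : p ≠ ∞) (x : lp (fun _ : α => 𝕜) p) (m : α) :
    HasSum (fun n => x n * (Γ (lp.single p n 1) : ∀ _ : α, 𝕜) m) (Γ x m) := by
  have h := ((lp.hasSum_single hp x).mapL Γ).mapL (lp.evalCLM 𝕜 (fun _ => 𝕜) q m)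
  have hterm (n : α) :
      lp.single p n (x n) = x n • (lp.single p n 1 : lp (fun _ : α => 𝕜) p) := by
    rw [← lp.single_smul, smul_eq_mul, mul_one]
  simpa [Function.comp_def, hterm, lp.evalCLM] using h

section Hankel

def IsHankel (Γ : lp (fun _ : ℕ => 𝕜) p →L[𝕜] lp (fun _ : ℕ => 𝕜) q) (φ : ℕ → 𝕜) : Prop :=
  ∀ m n : ℕ, (Γ (lp.single p n 1) : ∀ _ : ℕ, 𝕜) m = φ (m + n)

variable {φ : ℕ → 𝕜} {Γ : lp (fun _ : ℕ => 𝕜) p →L[𝕜] lp (fun _ : ℕ => 𝕜) q}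

lemma hasSum_of_hankel (hp : p ≠ ∞) (hΓ : IsHankel Γ φ)
    (x : lp (fun _ : ℕ => 𝕜) p) (m : ℕ) :
    HasSum (fun n => x n * φ (m + n)) (Γ x m) := by
  simpa only [hΓ m] using hasSum_mul_apply_single Γ hp x m

lemma apply_shift_of_hankel (hp : p ≠ ∞) (hΓ : IsHankel Γ φ)
    (x : lp (fun _ : ℕ => 𝕜) p) (m : ℕ) : Γ (shift 𝕜 x) m = Γ x (m + 1) := by
  have h := hasSum_of_hankel hp hΓ (shift 𝕜 x) m
  rw [← hasSum_nat_add_iff' 1] at h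
  have h' := hasSum_of_hankel hp hΓ x (m + 1)
  simp only [shift_apply_succ, Finset.range_one, Finset.sum_singleton, shift_apply_zero,
    zero_mul, sub_zero] at h
  refine h.unique ?_
  simpa [add_assoc, add_comm 1] using h'

lemma shift_mem_ker_of_hankel (hp : p ≠ ∞)
    (hΓ : IsHankel Γ φ) :
    ∀ x ∈ LinearMap.ker (Γ : lp (fun _ : ℕ => 𝕜) p →ₗ[𝕜] lp (fun _ : ℕ => 𝕜) q),
      shift 𝕜 x ∈ LinearMap.ker (Γ : lp (fun _ : ℕ => 𝕜) p →ₗ[𝕜] lp (fun _ : ℕ => 𝕜) q) := by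
  intro x hx
  rw [LinearMap.mem_ker, ContinuousLinearMap.coe_coe] at hx ⊢
  ext m
  rw [apply_shift_of_hankel hp hΓ, hx]
  rfl

theorem ker_eq_bot_or_not_finiteDimensional_of_hankel [IsAlgClosed 𝕜] (hp : p ≠ ∞)
    (hΓ : IsHankel Γ φ) :
    LinearMap.ker (Γ : lp (fun _ : ℕ => 𝕜) p →ₗ[𝕜] lp (fun _ : ℕ => 𝕜) q) = ⊥ ∨
      ¬ FiniteDimensional 𝕜
        (LinearMap.ker (Γ : lp (fun _ : ℕ => 𝕜) p →ₗ[𝕜] lp (fun _ : ℕ => 𝕜) q)) :=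
  Submodule.eq_bot_or_not_finiteDimensional_of_forall_eq_smul_imp_eq_zero
    (fun _ _ => eq_zero_of_shift_eq_smul) (shift_mem_ker_of_hankel hp hΓ)

end Hankel

end lp

/-- The kernel of a bounded Hankel operator `Γ_φ = [φ(m+n)]` on `ℓ²(ℕ,ℂ)` is either `{0}`
or infinite-dimensional; consequently `ν_K(0) ∈ {0, ∞}` for `K = Γ_φ*Γ_φ`. -/
theorem stmt_12 (φ : ℕ → ℂ)
    (Γ : lp (fun _ : ℕ => ℂ) 2 →L[ℂ] lp (fun _ : ℕ => ℂ) 2)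
    (hΓ : ∀ m n : ℕ, (Γ (lp.single 2 n 1) : ∀ _ : ℕ, ℂ) m = φ (m + n)) :
    (LinearMap.ker (Γ : lp (fun _ : ℕ => ℂ) 2 →ₗ[ℂ] lp (fun _ : ℕ => ℂ) 2) = ⊥
      ∨ ¬ FiniteDimensional ℂ
          (LinearMap.ker (Γ : lp (fun _ : ℕ => ℂ) 2 →ₗ[ℂ] lp (fun _ : ℕ => ℂ) 2)))
    ∧ (LinearMap.ker ((ContinuousLinearMap.adjoint Γ ∘L Γ :
          lp (fun _ : ℕ => ℂ) 2 →L[ℂ] lp (fun _ : ℕ => ℂ) 2) :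
          lp (fun _ : ℕ => ℂ) 2 →ₗ[ℂ] lp (fun _ : ℕ => ℂ) 2) = ⊥
      ∨ ¬ FiniteDimensional ℂ
          (LinearMap.ker ((ContinuousLinearMap.adjoint Γ ∘L Γ :
            lp (fun _ : ℕ => ℂ) 2 →L[ℂ] lp (fun _ : ℕ => ℂ) 2) :
            lp (fun _ : ℕ => ℂ) 2 →ₗ[ℂ] lp (fun _ : ℕ => ℂ) 2))) := by
  have hker := lp.ker_eq_bot_or_not_finiteDimensional_of_hankel (by norm_num) hΓ
  exact ⟨hker, by rwa [Γ.ker_adjoint_comp_self]⟩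
end

section
/- Let R₊ be the orthogonal projection of L²(𝕋) onto the closed linear span of {eₙ : n ≥ 0}, where eₙ(e^{iθ}) = e^{inθ}. For f, g ∈ L^∞(𝕋) with conj(f) = g a.e., define W = M_g∘[M_f, R₊] − M_f∘[M_g, R₊] on L²(𝕋). Then for all m, n ∈ ℕ: ⟨W eₙ, eₘ⟩ = ∑_{j=0}^∞ [ conj(f̂(−(j+m+1)))·f̂(−(j+n+1)) − conj(ĝ(−(j+m+1)))·ĝ(−(j+n+1)) ], where ĥ(k) = (1/2π)∫₀^{2π} h(e^{iθ}) e^{−ikθ} dθ; that is, R₊WR₊ = Γ_f*Γ_f − Γ_g*Γ_g, where Γ_φ is the Hankel operator on H² with matrix entries ⟨Γ_φ eₙ, eₘ⟩ = φ̂(−(m+n+1)). -/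
/-!
In the Fourier basis, `⟪u, v - R₊ v⟫ = ∑_{j ≥ 0} conj û(-(j+1)) · v̂(-(j+1))`, and the Fourier
coefficients of `M_φ eₙ` are those of `φ` shifted by `n`, so `⟪M_φ eₘ, (1 - R₊) M_φ eₙ⟫` is the
`(m, n)` entry of `Γ_φ* Γ_φ`. Since `conj f = g`, the multiplication operators `M_f` and `M_g` commute
and are adjoint to each other; this collapses `⟪eₘ, W eₙ⟫` to `⟪M_g eₘ, R₊ M_g eₙ⟫ - ⟪M_f eₘ, R₊ M_f eₙ⟫`,
and `⟪M_f eₘ, M_f eₙ⟫ = ⟪M_g eₘ, M_g eₙ⟫` lets one replace `R₊` by `R₊ - 1` in both terms.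
-/

open MeasureTheory AddCircle
open scoped Real ENNReal InnerProductSpace

instance : Fact (0 < 2 * π) := ⟨by positivity⟩

/-- The Hardy subspace `H²` of `L²(𝕋)`: the closed linear span of `{eₙ : n ≥ 0}`. -/
noncomputable def hardySubmodule :
    Submodule ℂ (Lp ℂ 2 (@haarAddCircle (2 * π) _)) :=
  (Submodule.span ℂ (Set.range fun n : ℕ => fourierLp 2 (n : ℤ))).topologicalClosure

instance : CompleteSpace hardySubmodule :=
  Submodule.topologicalClosure.completeSpace _

/-- The Riesz projection `R₊`: the orthogonal projection of `L²(𝕋)` onto the Hardy space. -/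
noncomputable def rieszPlus :
    Lp ℂ 2 (@haarAddCircle (2 * π) _) →L[ℂ] Lp ℂ 2 (@haarAddCircle (2 * π) _) :=
  hardySubmodule.subtypeL ∘L hardySubmodule.orthogonalProjectionOnto

open ComplexConjugate

local notation "L²𝕋" => Lp ℂ 2 (@haarAddCircle (2 * π) _)

theorem fourierCoeff_mul_fourier {T : ℝ} [Fact (0 < T)] (φ : AddCircle T → ℂ) (l k : ℤ) :
    fourierCoeff (fun x => φ x * fourier l x) k = fourierCoeff φ (k - l) := by
  unfold fourierCoeff
  congr 1 with x
  rw [smul_eq_mul, smul_eq_mul, neg_sub, sub_eq_add_neg, add_comm, fourier_add]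
  ring

theorem inner_fourierLp_mul_inner {T : ℝ} [Fact (0 < T)] (u v : Lp ℂ 2 (@haarAddCircle T _))
    (k : ℤ) : ⟪u, fourierLp 2 k⟫_ℂ * ⟪(fourierLp 2 k : Lp ℂ 2 (@haarAddCircle T _)), v⟫_ℂ
      = conj (fourierCoeff u k) * fourierCoeff v k := by
  rw [← coe_fourierBasis, ← inner_conj_symm u, ← HilbertBasis.repr_apply_apply,
    ← HilbertBasis.repr_apply_apply, fourierBasis_repr, fourierBasis_repr]

theorem fourierLp_mem_hardySubmodule (n : ℕ) : (fourierLp 2 (n : ℤ) : L²𝕋) ∈ hardySubmodule :=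
  Submodule.le_topologicalClosure _ (Submodule.subset_span ⟨n, rfl⟩)

theorem fourierLp_mem_hardySubmodule_orthogonal {k : ℤ} (hk : k < 0) :
    (fourierLp 2 k : L²𝕋) ∈ hardySubmoduleᗮ := by
  rw [hardySubmodule, Submodule.orthogonal_closure, Submodule.mem_orthogonal]
  intro u hu
  refine Submodule.mem_orthogonal_singleton_iff_inner_left.1 (Submodule.span_le.2 ?_ hu)
  rintro _ ⟨n, rfl⟩
  exact Submodule.mem_orthogonal_singleton_iff_inner_left.2
    (orthonormal_fourier.inner_eq_zero (by omega))

theorem rieszPlus_eq_starProjection : rieszPlus = hardySubmodule.starProjection := rfl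

theorem inner_rieszPlus_left (u v : L²𝕋) : ⟪rieszPlus u, v⟫_ℂ = ⟪u, rieszPlus v⟫_ℂ := by
  rw [rieszPlus_eq_starProjection, Submodule.inner_starProjection_left_eq_right]

theorem rieszPlus_fourierLp (k : ℤ) :
    rieszPlus (fourierLp 2 k) = if 0 ≤ k then (fourierLp 2 k : L²𝕋) else 0 := by
  rw [rieszPlus_eq_starProjection]
  split_ifs with hk
  · lift k to ℕ using hk
    exact Submodule.starProjection_eq_self_iff.2 (fourierLp_mem_hardySubmodule k)
  · exact (Submodule.starProjection_apply_eq_zero_iff _).2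
      (fourierLp_mem_hardySubmodule_orthogonal (not_le.1 hk))

theorem fourierCoeff_sub_rieszPlus (v : L²𝕋) (k : ℤ) :
    fourierCoeff ⇑(v - rieszPlus v) k = if 0 ≤ k then 0 else fourierCoeff v k := by
  rw [← fourierBasis_repr, HilbertBasis.repr_apply_apply, inner_sub_right, coe_fourierBasis,
    ← inner_rieszPlus_left, rieszPlus_fourierLp]
  split_ifs
  · exact sub_self _
  · rw [inner_zero_left, sub_zero, ← coe_fourierBasis, ← HilbertBasis.repr_apply_apply,
      fourierBasis_repr]

theorem hasSum_inner_sub_rieszPlus (u v : L²𝕋) :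
    HasSum (fun j : ℕ => conj (fourierCoeff u (-(j + 1 : ℤ))) * fourierCoeff v (-(j + 1 : ℤ)))
      ⟪u, v - rieszPlus v⟫_ℂ := by
  have h := fourierBasis.hasSum_inner_mul_inner u (v - rieszPlus v)
  simp only [coe_fourierBasis, inner_fourierLp_mul_inner, fourierCoeff_sub_rieszPlus] at h
  refine ((Function.Injective.hasSum_iff (g := fun j : ℕ => -(j + 1 : ℤ))
    (fun i j hij => by simpa using hij) ?_).2 h).congr_fun fun j => ?_
  · rintro k hk
    rw [if_pos, mul_zero]
    by_contra hk_neg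
    exact hk ⟨(-k - 1).toNat, by simp only; omega⟩
  · simp only [Function.comp_apply, if_neg (show ¬ (0 : ℤ) ≤ -(j + 1) by omega)]

def IsMulOperator {α : Type*} [MeasurableSpace α] {μ : Measure α}
    (M : Lp ℂ 2 μ →L[ℂ] Lp ℂ 2 μ) (φ : α → ℂ) : Prop :=
  ∀ u : Lp ℂ 2 μ, (M u : α → ℂ) =ᵐ[μ] fun x => φ x * u x

namespace IsMulOperator

section MeasureSpace

variable {α : Type*} [MeasurableSpace α] {μ : Measure α} {M N : Lp ℂ 2 μ →L[ℂ] Lp ℂ 2 μ}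
  {φ ψ : α → ℂ}

theorem inner_map_left (hM : IsMulOperator M φ) (hN : IsMulOperator N ψ)
    (hφψ : (fun x => conj (φ x)) =ᵐ[μ] ψ) (u v : Lp ℂ 2 μ) : ⟪N u, v⟫_ℂ = ⟪u, M v⟫_ℂ := by
  rw [L2.inner_def, L2.inner_def]
  refine integral_congr_ae ?_
  filter_upwards [hM v, hN u, hφψ] with x hMv hNu hx
  simp only [RCLike.inner_apply, hMv, hNu, ← hx, map_mul, Complex.conj_conj]
  ring

theorem inner_map_right (hM : IsMulOperator M φ) (hN : IsMulOperator N ψ)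
    (hφψ : (fun x => conj (φ x)) =ᵐ[μ] ψ) (u v : Lp ℂ 2 μ) : ⟪u, N v⟫_ℂ = ⟪M u, v⟫_ℂ := by
  rw [← inner_conj_symm, inner_map_left hM hN hφψ, inner_conj_symm]

theorem map_comm (hM : IsMulOperator M φ) (hN : IsMulOperator N ψ) (u : Lp ℂ 2 μ) :
    M (N u) = N (M u) := by
  refine Lp.ext ?_
  filter_upwards [hM (N u), hN u, hN (M u), hM u] with x h₁ h₂ h₃ h₄
  rw [h₁, h₂, h₃, h₄, mul_left_comm]

theorem inner_map_map_eq (hM : IsMulOperator M φ) (hN : IsMulOperator N ψ)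
    (hφψ : (fun x => conj (φ x)) =ᵐ[μ] ψ) (u v : Lp ℂ 2 μ) :
    ⟪N u, N v⟫_ℂ = ⟪M u, M v⟫_ℂ := by
  rw [inner_map_left hM hN hφψ, map_comm hM hN, inner_map_right hM hN hφψ]

theorem inner_comp_commutator_sub (hM : IsMulOperator M φ) (hN : IsMulOperator N ψ)
    (hφψ : (fun x => conj (φ x)) =ᵐ[μ] ψ) (P : Lp ℂ 2 μ →L[ℂ] Lp ℂ 2 μ) (u v : Lp ℂ 2 μ) :
    ⟪u, (N ∘L (M ∘L P - P ∘L M) - M ∘L (N ∘L P - P ∘L N)) v⟫_ℂ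
      = ⟪M u, M v - P (M v)⟫_ℂ - ⟪N u, N v - P (N v)⟫_ℂ := by
  have hW : (N ∘L (M ∘L P - P ∘L M) - M ∘L (N ∘L P - P ∘L N)) v
      = M (P (N v)) - N (P (M v)) := by
    simp only [sub_apply, ContinuousLinearMap.comp_apply, map_sub, map_comm hM hN]
    abel
  rw [hW, inner_sub_right, ← inner_map_left hM hN hφψ, inner_map_right hM hN hφψ,
    inner_sub_right, inner_sub_right, inner_map_map_eq hM hN hφψ]
  ring

end MeasureSpace

theorem fourierCoeff_map_fourierLp {T : ℝ} [Fact (0 < T)]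
    {M : Lp ℂ 2 (@haarAddCircle T _) →L[ℂ] Lp ℂ 2 (@haarAddCircle T _)} {φ : AddCircle T → ℂ}
    (hM : IsMulOperator M φ) (l k : ℤ) :
    fourierCoeff ⇑(M (fourierLp 2 l)) k = fourierCoeff φ (k - l) := by
  have h : ⇑(M (fourierLp 2 l)) =ᵐ[haarAddCircle] fun x => φ x * fourier l x := by
    filter_upwards [hM (fourierLp 2 l), coeFn_fourierLp 2 l] with x hMx hx
    rw [hMx, hx]
  rw [fourierCoeff_congr_ae h, fourierCoeff_mul_fourier]

theorem hasSum_hankel {M : L²𝕋 →L[ℂ] L²𝕋} {φ : AddCircle (2 * π) → ℂ} (hM : IsMulOperator M φ)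
    (m n : ℕ) :
    HasSum (fun j : ℕ =>
        conj (fourierCoeff φ (-(j + m + 1 : ℤ))) * fourierCoeff φ (-(j + n + 1 : ℤ)))
      ⟪M (fourierLp 2 m), M (fourierLp 2 n) - rieszPlus (M (fourierLp 2 n))⟫_ℂ := by
  refine (hasSum_inner_sub_rieszPlus _ _).congr_fun fun j => ?_
  simp only [fourierCoeff_map_fourierLp hM]
  ring_nf

end IsMulOperator

theorem stmt_15_general (f g : AddCircle (2 * π) → ℂ)
    (Mf Mg : Lp ℂ 2 (@haarAddCircle (2 * π) _) →L[ℂ] Lp ℂ 2 (@haarAddCircle (2 * π) _))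
    (hMf : ∀ u : Lp ℂ 2 (@haarAddCircle (2 * π) _),
      (Mf u : AddCircle (2 * π) → ℂ) =ᵐ[@haarAddCircle (2 * π) _] fun x => f x * u x)
    (hMg : ∀ u : Lp ℂ 2 (@haarAddCircle (2 * π) _),
      (Mg u : AddCircle (2 * π) → ℂ) =ᵐ[@haarAddCircle (2 * π) _] fun x => g x * u x)
    (hfg : (fun x => starRingEnd ℂ (f x)) =ᵐ[@haarAddCircle (2 * π) _] g)
    (W : Lp ℂ 2 (@haarAddCircle (2 * π) _) →L[ℂ] Lp ℂ 2 (@haarAddCircle (2 * π) _))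
    (hW : W = Mg ∘L (Mf ∘L rieszPlus - rieszPlus ∘L Mf)
            - Mf ∘L (Mg ∘L rieszPlus - rieszPlus ∘L Mg)) :
    ∀ m n : ℕ,
      ⟪(fourierLp 2 (m : ℤ) : Lp ℂ 2 (@haarAddCircle (2 * π) _)),
          W (fourierLp 2 (n : ℤ))⟫_ℂ
        = ∑' j : ℕ,
            (starRingEnd ℂ (fourierCoeff f (-(j + m + 1 : ℤ)))
                * fourierCoeff f (-(j + n + 1 : ℤ))
              - starRingEnd ℂ (fourierCoeff g (-(j + m + 1 : ℤ)))
                * fourierCoeff g (-(j + n + 1 : ℤ))) := by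
  intro m n
  rw [hW, IsMulOperator.inner_comp_commutator_sub hMf hMg hfg]
  exact (((IsMulOperator.hasSum_hankel hMf m n).sub
    (IsMulOperator.hasSum_hankel hMg m n)).tsum_eq).symm

/-- For `f, g ∈ L^∞(𝕋)` with `conj f = g` a.e., the compression of
`W = M_g[M_f,R₊] − M_f[M_g,R₊]` to `H²` has matrix entries
`⟨W eₙ, eₘ⟩ = ∑_j (conj f̂(−(j+m+1))·f̂(−(j+n+1)) − conj ĝ(−(j+m+1))·ĝ(−(j+n+1)))`;
that is, `R₊WR₊ = Γ_f*Γ_f − Γ_g*Γ_g`. -/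
theorem stmt_15 (f g : AddCircle (2 * π) → ℂ)
    (hf : MemLp f ⊤ (@haarAddCircle (2 * π) _)) (hg : MemLp g ⊤ (@haarAddCircle (2 * π) _))
    (Mf Mg : Lp ℂ 2 (@haarAddCircle (2 * π) _) →L[ℂ] Lp ℂ 2 (@haarAddCircle (2 * π) _))
    (hMf : ∀ u : Lp ℂ 2 (@haarAddCircle (2 * π) _),
      (Mf u : AddCircle (2 * π) → ℂ) =ᵐ[@haarAddCircle (2 * π) _] fun x => f x * u x)
    (hMg : ∀ u : Lp ℂ 2 (@haarAddCircle (2 * π) _),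
      (Mg u : AddCircle (2 * π) → ℂ) =ᵐ[@haarAddCircle (2 * π) _] fun x => g x * u x)
    (hfg : (fun x => starRingEnd ℂ (f x)) =ᵐ[@haarAddCircle (2 * π) _] g)
    (W : Lp ℂ 2 (@haarAddCircle (2 * π) _) →L[ℂ] Lp ℂ 2 (@haarAddCircle (2 * π) _))
    (hW : W = Mg ∘L (Mf ∘L rieszPlus - rieszPlus ∘L Mf)
            - Mf ∘L (Mg ∘L rieszPlus - rieszPlus ∘L Mg)) :
    ∀ m n : ℕ,
      ⟪(fourierLp 2 (m : ℤ) : Lp ℂ 2 (@haarAddCircle (2 * π) _)),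
          W (fourierLp 2 (n : ℤ))⟫_ℂ
        = ∑' j : ℕ,
            (starRingEnd ℂ (fourierCoeff f (-(j + m + 1 : ℤ)))
                * fourierCoeff f (-(j + n + 1 : ℤ))
              - starRingEnd ℂ (fourierCoeff g (-(j + m + 1 : ℤ)))
                * fourierCoeff g (-(j + n + 1 : ℤ))) :=
  stmt_15_general f g Mf Mg hMf hMg hfg W hW
end

section
/- Let F = [[0,−1],[1,0]], let a : ℕ → ℝ² with ∑_{x≥0}‖a(x)‖² < ∞, let (S_x) be 2×2 real matrices with a(x+1) = S_x a(x), and let C be a constant 2×2 real matrix with S_yᵀ F S_x − F = (x−y)·C for all x ≠ y. Write K(x,y) = ⟨F a(x), a(y)⟩/(x−y) for x ≠ y. Then K satisfies the discrete Lyapunov-type identity K(x+1,y+1) − K(x,y) = ⟨C a(x), a(y)⟩ for all x, y ∈ ℕ with x+1 ≠ y+1 and x ≠ y. -/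
open Matrix

namespace Matrix

variable {n R : Type*} [Fintype n] [CommRing R]

theorem mulVec_mulVec_dotProduct_mulVec (M A B : Matrix n n R) (u v : n → R) :
    (M *ᵥ (A *ᵥ u)) ⬝ᵥ (B *ᵥ v) = ((Bᵀ * M * A) *ᵥ u) ⬝ᵥ v := by
  rw [← mulVec_mulVec, ← mulVec_mulVec, dotProduct_mulVec, mulVec_transpose]

theorem mulVec_mulVec_dotProduct_mulVec_sub {F A B C : Matrix n n R} {c : R}
    (h : Bᵀ * F * A - F = c • C) (u v : n → R) :
    (F *ᵥ (A *ᵥ u)) ⬝ᵥ (B *ᵥ v) - (F *ᵥ u) ⬝ᵥ v = c * ((C *ᵥ u) ⬝ᵥ v) := by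
  rw [mulVec_mulVec_dotProduct_mulVec, ← sub_dotProduct, ← sub_mulVec, h, smul_mulVec,
    smul_dotProduct, smul_eq_mul]

end Matrix

theorem stmt_19_general (a : ℕ → Fin 2 → ℝ)
    (S : ℕ → Matrix (Fin 2) (Fin 2) ℝ)
    (hS : ∀ x : ℕ, a (x + 1) = (S x).mulVec (a x))
    (C : Matrix (Fin 2) (Fin 2) ℝ)
    (hC : ∀ x y : ℕ, x ≠ y →
      (S y)ᵀ * !![(0 : ℝ), -1; 1, 0] * (S x) - !![(0 : ℝ), -1; 1, 0]
        = ((x : ℝ) - (y : ℝ)) • C)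
    (K : ℕ → ℕ → ℝ)
    (hK : ∀ x y : ℕ, x ≠ y →
      K x y = dotProduct ((!![(0 : ℝ), -1; 1, 0]).mulVec (a x)) (a y) / ((x : ℝ) - y)) :
    ∀ x y : ℕ, x ≠ y →
      K (x + 1) (y + 1) - K x y = dotProduct (C.mulVec (a x)) (a y) := by
  intro x y hxy
  have hsub : (x : ℝ) - y ≠ 0 := sub_ne_zero.mpr (Nat.cast_injective.ne hxy)
  have hshift : ((x + 1 : ℕ) : ℝ) - ((y + 1 : ℕ) : ℝ) = (x : ℝ) - y := by push_cast; ring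
  rw [hK _ _ (by omega), hK _ _ hxy, hshift, div_sub_div_same, hS, hS,
    mulVec_mulVec_dotProduct_mulVec_sub (hC x y hxy), mul_div_cancel_left₀ _ hsub]

/-- The key Lyapunov-type computation: if `a(x+1) = S_x a(x)` and
`S_yᵀ F S_x − F = (x−y)·C`, then the Tracy–Widom kernel
`K(x,y) = ⟨F a(x), a(y)⟩/(x−y)` satisfies
`K(x+1,y+1) − K(x,y) = ⟨C a(x), a(y)⟩` for `x ≠ y`. -/
theorem stmt_19 (a : ℕ → Fin 2 → ℝ)
    (ha : Summable fun x : ℕ => (a x 0) ^ 2 + (a x 1) ^ 2)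
    (S : ℕ → Matrix (Fin 2) (Fin 2) ℝ)
    (hS : ∀ x : ℕ, a (x + 1) = (S x).mulVec (a x))
    (C : Matrix (Fin 2) (Fin 2) ℝ)
    (hC : ∀ x y : ℕ, x ≠ y →
      (S y)ᵀ * !![(0 : ℝ), -1; 1, 0] * (S x) - !![(0 : ℝ), -1; 1, 0]
        = ((x : ℝ) - (y : ℝ)) • C)
    (K : ℕ → ℕ → ℝ)
    (hK : ∀ x y : ℕ, x ≠ y →
      K x y = dotProduct ((!![(0 : ℝ), -1; 1, 0]).mulVec (a x)) (a y) / ((x : ℝ) - y)) :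
    ∀ x y : ℕ, x ≠ y →
      K (x + 1) (y + 1) - K x y = dotProduct (C.mulVec (a x)) (a y) :=
  stmt_19_general a S hS C hC K hK
end
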